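/- arXiv:1511.01856 — 5 statements merged into one kernel-verified Lean document; each statement's English description precedes it below -/
import Mathlib

section
/- For all z ≥ 0, the integral ∫₀^∞ (1+|z-z'|)^{-2/3} (1+z')^{-2/3} dz' is bounded by C (1+z)^{-1/3} for a universal constant C. -/
/-!
Split the half-line at `2z`. On `[0, 2z]` the bases `1 + |z - x|` and `1 + x` sum to at least
`1 + z`, so one of them is at least `(1 + z) / 2`. Replacing it by `(1 + z) / 2` leaves a single
power `(1 + ·) ^ (-a)` or `(1 + ·) ^ (-b)` with exponent above `-1`, whose integral over `[0, 2z]`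
is `O((1 + z) ^ (1 - a))`, resp. `O((1 + z) ^ (1 - b))`. Beyond `2z`, `1 + |z - x| ≥ (1 + x) / 2`,
so the integrand is at most `2 (1 + x) ^ (-(a + b))`, whose tail integral is
`O((1 + z) ^ (1 - a - b))` because `a + b > 1`. For `a = b = 2/3` this rate is `(1 + z) ^ (-1/3)`.
-/

open MeasureTheory Real Set

section

variable {s c : ℝ}

theorem integral_one_add_rpow_neg_le (hs : s < 1) :
    ∫ x in (0:ℝ)..c, (1 + x) ^ (-s) ≤ (1 + c) ^ (1 - s) / (1 - s) := by
  rw [intervalIntegral.integral_comp_add_left (fun x => x ^ (-s)),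
    integral_rpow (Or.inl (by linarith)), show -s + 1 = 1 - s by ring, add_zero, one_rpow]
  gcongr
  linarith

theorem integrableOn_Ioi_one_add_rpow_neg (hs : 1 < s) (hc : -1 < c) :
    IntegrableOn (fun x => (1 + x) ^ (-s)) (Ioi c) := by
  simpa only [add_comm] using integrableOn_add_rpow_Ioi_of_lt (m := 1) (by linarith) hc

theorem integral_Ioi_one_add_rpow_neg (hs : 1 < s) (hc : -1 < c) :
    ∫ x in Ioi c, (1 + x) ^ (-s) = (1 + c) ^ (1 - s) / (s - 1) := by
  have hshift := (measurePreserving_add_left volume (1:ℝ)).setIntegral_preimage_emb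
    (measurableEmbedding_addLeft 1) (fun x => x ^ (-s)) (Ioi (1 + c))
  rw [preimage_const_add_Ioi, add_sub_cancel_left] at hshift
  rw [hshift, integral_Ioi_rpow_of_lt (by linarith) (by linarith),
    show -s + 1 = 1 - s by ring, neg_div, ← div_neg, neg_sub]

theorem continuousOn_one_add_rpow (r : ℝ) : ContinuousOn (fun x : ℝ => (1 + x) ^ r) (Ici 0) :=
  ContinuousOn.rpow_const (f := fun x : ℝ => 1 + x) (by fun_prop) fun x (hx : 0 ≤ x) =>
    Or.inl (by positivity)

end

theorem integral_abs_sub_eq_two_mul {f : ℝ → ℝ} (hf : ContinuousOn f (Ici 0)) {z : ℝ}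
    (hz : 0 ≤ z) : ∫ x in (0:ℝ)..2 * z, f |z - x| = 2 * ∫ x in (0:ℝ)..z, f x := by
  have hint : ∀ a b : ℝ, IntervalIntegrable (fun x => f |z - x|) volume a b := fun a b =>
    (hf.comp_continuous (by fun_prop) fun x => abs_nonneg (z - x)).intervalIntegrable a b
  have hleft : ∫ x in (0:ℝ)..z, f |z - x| = ∫ x in (0:ℝ)..z, f x := by
    rw [intervalIntegral.integral_congr (g := fun x => f (z - x)) fun x hx => ?_]
    · simp [intervalIntegral.integral_comp_sub_left]
    · rw [uIcc_of_le hz] at hx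
      simp only [abs_of_nonneg (sub_nonneg.2 hx.2)]
  have hright : ∫ x in z..2 * z, f |z - x| = ∫ x in (0:ℝ)..z, f x := by
    rw [intervalIntegral.integral_congr (g := fun x => f (x - z)) fun x hx => ?_]
    · simp [intervalIntegral.integral_comp_sub_right, two_mul]
    · rw [uIcc_of_le (by linarith)] at hx
      simp only [abs_sub_comm z x, abs_of_nonneg (sub_nonneg.2 hx.1)]
  rw [← intervalIntegral.integral_add_adjacent_intervals (hint 0 z) (hint z (2 * z)),
    hleft, hright, two_mul]

section

variable {a b c u v w x z : ℝ}

theorem div_two_rpow_neg_le (ha : a ≤ 1) (hw : 0 < w) : (w / 2) ^ (-a) ≤ 2 * w ^ (-a) := by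
  rw [div_rpow hw.le zero_le_two, rpow_neg zero_le_two, div_inv_eq_mul, mul_comm]
  gcongr
  exact rpow_le_self_of_one_le one_le_two ha

theorem one_add_two_mul_rpow_le (ha₀ : 0 ≤ a) (ha₁ : a ≤ 1) (hz : 0 ≤ z) :
    (1 + 2 * z) ^ a ≤ 2 * (1 + z) ^ a := by
  calc (1 + 2 * z) ^ a ≤ (2 * (1 + z)) ^ a := by gcongr; linarith
    _ ≤ 2 * (1 + z) ^ a := by
        rw [mul_rpow zero_le_two (by linarith)]
        gcongr
        exact rpow_le_self_of_one_le one_le_two ha₁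

theorem rpow_neg_mul_rpow_neg_le_of_le_add (ha₀ : 0 ≤ a) (ha₁ : a ≤ 1) (hb₀ : 0 ≤ b)
    (hb₁ : b ≤ 1) (hu : 0 < u) (hv : 0 < v) (hw : 0 < w) (huv : w ≤ u + v) :
    u ^ (-a) * v ^ (-b) ≤ 2 * (w ^ (-a) * v ^ (-b) + w ^ (-b) * u ^ (-a)) := by
  have hwa := rpow_nonneg hw.le (-a)
  have hwb := rpow_nonneg hw.le (-b)
  have hua := rpow_nonneg hu.le (-a)
  have hvb := rpow_nonneg hv.le (-b)
  rcases le_total (w / 2) u with hu' | hv'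
  · have : u ^ (-a) ≤ 2 * w ^ (-a) :=
      (rpow_le_rpow_of_nonpos (by positivity) hu' (by linarith)).trans
        (div_two_rpow_neg_le ha₁ hw)
    nlinarith
  · have : v ^ (-b) ≤ 2 * w ^ (-b) :=
      (rpow_le_rpow_of_nonpos (by positivity) (by linarith) (by linarith)).trans
        (div_two_rpow_neg_le hb₁ hw)
    nlinarith

theorem one_add_abs_sub_rpow_mul_le_of_two_mul_le (ha₀ : 0 ≤ a) (ha₁ : a ≤ 1) (hz : 0 ≤ z)
    (hx : 2 * z ≤ x) : (1 + |z - x|) ^ (-a) * (1 + x) ^ (-b) ≤ 2 * (1 + x) ^ (-(a + b)) := by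
  have hx₀ : 0 < 1 + x := by linarith
  have hfar : (1 + x) / 2 ≤ 1 + |z - x| := by
    rw [abs_sub_comm, abs_of_nonneg (by linarith)]
    linarith
  calc (1 + |z - x|) ^ (-a) * (1 + x) ^ (-b)
      ≤ 2 * (1 + x) ^ (-a) * (1 + x) ^ (-b) := by
        gcongr
        exact (rpow_le_rpow_of_nonpos (by positivity) hfar (by linarith)).trans
          (div_two_rpow_neg_le ha₁ hx₀)
    _ = 2 * (1 + x) ^ (-(a + b)) := by
        rw [mul_assoc, ← rpow_add hx₀, neg_add]

theorem continuous_one_add_abs_sub_rpow (r : ℝ) :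
    Continuous fun x : ℝ => (1 + |z - x|) ^ r :=
  (by fun_prop : Continuous fun x : ℝ => 1 + |z - x|).rpow_const fun x => Or.inl (by positivity)

theorem intervalIntegrable_one_add_abs_sub_rpow_mul (hc : 0 ≤ c) :
    IntervalIntegrable (fun x => (1 + |z - x|) ^ (-a) * (1 + x) ^ (-b)) volume 0 c := by
  refine ContinuousOn.intervalIntegrable (((continuous_one_add_abs_sub_rpow (-a)).continuousOn.mul
    (continuousOn_one_add_rpow (-b))).mono ?_)
  rw [uIcc_of_le hc]
  exact Icc_subset_Ici_self

theorem intervalIntegral_one_add_abs_sub_rpow_mul_le (ha₀ : 0 ≤ a) (ha₁ : a < 1)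
    (hb₀ : 0 ≤ b) (hb₁ : b < 1) (hz : 0 ≤ z) :
    ∫ x in (0:ℝ)..2 * z, (1 + |z - x|) ^ (-a) * (1 + x) ^ (-b)
      ≤ 4 * (1 / (1 - a) + 1 / (1 - b)) * (1 + z) ^ (1 - a - b) := by
  have hz₁ : 0 < 1 + z := by linarith
  have hsub : uIcc 0 (2 * z) ⊆ Ici 0 := by
    rw [uIcc_of_le (by linarith)]
    exact Icc_subset_Ici_self
  have hfar : IntervalIntegrable (fun x => (1 + |z - x|) ^ (-a)) volume 0 (2 * z) :=
    (continuous_one_add_abs_sub_rpow (-a)).intervalIntegrable _ _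
  have hnear : IntervalIntegrable (fun x => (1 + x) ^ (-b)) volume 0 (2 * z) :=
    ((continuousOn_one_add_rpow (-b)).mono hsub).intervalIntegrable
  calc ∫ x in (0:ℝ)..2 * z, (1 + |z - x|) ^ (-a) * (1 + x) ^ (-b)
      ≤ ∫ x in (0:ℝ)..2 * z,
          2 * ((1 + z) ^ (-a) * (1 + x) ^ (-b) + (1 + z) ^ (-b) * (1 + |z - x|) ^ (-a)) := by
        refine intervalIntegral.integral_mono_on (by linarith)
          (intervalIntegrable_one_add_abs_sub_rpow_mul (by linarith))
          (((hnear.const_mul _).add (hfar.const_mul _)).const_mul _) fun x hx => ?_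
        exact rpow_neg_mul_rpow_neg_le_of_le_add ha₀ ha₁.le hb₀ hb₁.le (by positivity)
          (by linarith [hx.1]) hz₁ (by linarith [le_abs_self (z - x)])
    _ = 2 * ((1 + z) ^ (-a) * ∫ x in (0:ℝ)..2 * z, (1 + x) ^ (-b)) +
          2 * ((1 + z) ^ (-b) * ∫ x in (0:ℝ)..2 * z, (1 + |z - x|) ^ (-a)) := by
        rw [intervalIntegral.integral_const_mul, intervalIntegral.integral_add
          (hnear.const_mul _) (hfar.const_mul _), intervalIntegral.integral_const_mul,
          intervalIntegral.integral_const_mul, mul_add]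
    _ ≤ 2 * ((1 + z) ^ (-a) * (2 * (1 + z) ^ (1 - b) / (1 - b))) +
          2 * ((1 + z) ^ (-b) * (2 * ((1 + z) ^ (1 - a) / (1 - a)))) := by
        rw [integral_abs_sub_eq_two_mul (continuousOn_one_add_rpow (-a)) hz]
        gcongr
        · exact (integral_one_add_rpow_neg_le hb₁).trans (by
            gcongr
            exact one_add_two_mul_rpow_le (by linarith) (by linarith) hz)
        · exact integral_one_add_rpow_neg_le ha₁
    _ = 4 * (1 / (1 - a) + 1 / (1 - b)) * (1 + z) ^ (1 - a - b) := by
        have hab : (1 + z) ^ (-a) * (1 + z) ^ (1 - b) = (1 + z) ^ (1 - a - b) := by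
          rw [← rpow_add hz₁]; ring_nf
        have hba : (1 + z) ^ (-b) * (1 + z) ^ (1 - a) = (1 + z) ^ (1 - a - b) := by
          rw [← rpow_add hz₁]; ring_nf
        linear_combination (4 / (1 - b)) * hab + (4 / (1 - a)) * hba

theorem integrableOn_Ioi_one_add_abs_sub_rpow_mul (ha₀ : 0 ≤ a) (ha₁ : a ≤ 1)
    (hab : 1 < a + b) (hz : 0 ≤ z) :
    IntegrableOn (fun x => (1 + |z - x|) ^ (-a) * (1 + x) ^ (-b)) (Ioi (2 * z)) := by
  refine ((integrableOn_Ioi_one_add_rpow_neg hab (by linarith)).const_mul 2).mono'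
    (by fun_prop) ((ae_restrict_mem measurableSet_Ioi).mono fun x (hx : 2 * z < x) => ?_)
  have hx₀ : 0 ≤ 1 + x := by linarith
  rw [norm_of_nonneg (mul_nonneg (rpow_nonneg (by positivity) _) (rpow_nonneg hx₀ _))]
  exact one_add_abs_sub_rpow_mul_le_of_two_mul_le ha₀ ha₁ hz hx.le

theorem integral_Ioi_two_mul_one_add_abs_sub_rpow_mul_le (ha₀ : 0 ≤ a) (ha₁ : a ≤ 1)
    (hab : 1 < a + b) (hz : 0 ≤ z) :
    ∫ x in Ioi (2 * z), (1 + |z - x|) ^ (-a) * (1 + x) ^ (-b)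
      ≤ 2 / (a + b - 1) * (1 + z) ^ (1 - a - b) := by
  calc ∫ x in Ioi (2 * z), (1 + |z - x|) ^ (-a) * (1 + x) ^ (-b)
      ≤ ∫ x in Ioi (2 * z), 2 * (1 + x) ^ (-(a + b)) :=
        setIntegral_mono_on (integrableOn_Ioi_one_add_abs_sub_rpow_mul ha₀ ha₁ hab hz)
          ((integrableOn_Ioi_one_add_rpow_neg hab (by linarith)).const_mul 2) measurableSet_Ioi
          fun x hx => one_add_abs_sub_rpow_mul_le_of_two_mul_le ha₀ ha₁ hz (le_of_lt hx)
    _ = 2 / (a + b - 1) * (1 + 2 * z) ^ (1 - a - b) := by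
        rw [integral_const_mul, integral_Ioi_one_add_rpow_neg hab (by linarith),
          sub_add_eq_sub_sub]
        ring
    _ ≤ 2 / (a + b - 1) * (1 + z) ^ (1 - a - b) :=
        mul_le_mul_of_nonneg_left
          (rpow_le_rpow_of_nonpos (by linarith) (by linarith) (by linarith))
          (div_nonneg zero_le_two (by linarith))

theorem integral_Ioi_zero_one_add_abs_sub_rpow_mul_le (ha : a < 1) (hb : b < 1)
    (hab : 1 < a + b) (hz : 0 ≤ z) :
    ∫ x in Ioi 0, (1 + |z - x|) ^ (-a) * (1 + x) ^ (-b)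
      ≤ (4 * (1 / (1 - a) + 1 / (1 - b)) + 2 / (a + b - 1)) * (1 + z) ^ (1 - a - b) := by
  have ha₀ : 0 ≤ a := by linarith
  have hb₀ : 0 ≤ b := by linarith
  rw [← intervalIntegral.integral_interval_add_Ioi'
    (intervalIntegrable_one_add_abs_sub_rpow_mul (by linarith))
    (integrableOn_Ioi_one_add_abs_sub_rpow_mul ha₀ ha.le hab hz), add_mul]
  exact add_le_add (intervalIntegral_one_add_abs_sub_rpow_mul_le ha₀ ha hb₀ hb hz)
    (integral_Ioi_two_mul_one_add_abs_sub_rpow_mul_le ha₀ ha.le hab hz)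

end

theorem integral_bound_0 :
    ∃ C : ℝ, 0 < C ∧ ∀ z : ℝ, 0 ≤ z →
      (∫ z' in Set.Ioi (0:ℝ), (1 + |z - z'|) ^ (-(2:ℝ)/3) * (1 + z') ^ (-(2:ℝ)/3))
        ≤ C * (1 + z) ^ (-(1:ℝ)/3) := by
  refine ⟨30, by norm_num, fun z hz => ?_⟩
  have h := integral_Ioi_zero_one_add_abs_sub_rpow_mul_le (a := 2 / 3) (b := 2 / 3)
    (by norm_num) (by norm_num) (by norm_num) hz
  norm_num at h ⊢
  exact h
end

section
/- For every ξ ∈ ℝ² with ξ ≠ 0, the polynomial equation -λ² - (λ² - |ξ|²)³ = 0 in the complex variable λ has exactly six roots counted with multiplicity, which can be grouped as ±λ₁, ±λ₂, ±λ₃ where λ₁ is real positive, λ₂ and λ₃ have positive real part, and λ₃ is the complex conjugate of λ₂. -/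
/-!
Put `t = λ² - |ξ|²`; the equation becomes `t³ + t + |ξ|² = 0`. This cubic has a real root
`t₁ ∈ (-|ξ|², 0)`, and its remaining quadratic factor `t² + t₁ t + t₁² + 1` has negative
discriminant, hence roots `ν, ν̄` off the real axis. So `λ²` ranges over `|ξ|² + t₁ > 0` and
`|ξ|² + ν, |ξ|² + ν̄`, which lie in the slit plane and therefore have square roots with
positive real part, the latter two conjugate to each other.
-/

open Complex ComplexConjugate

lemma exists_pos_re_sq_eq_of_mem_slitPlane {w : ℂ} (hw : w ∈ slitPlane) :
    ∃ z : ℂ, 0 < z.re ∧ z ^ 2 = w := by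
  obtain ⟨z, hz⟩ := IsAlgClosed.exists_pow_nat_eq w (n := 2) two_pos
  have hre : z.re ≠ 0 := by
    intro h
    rw [← hz, mem_slitPlane_iff] at hw
    simp only [pow_two, mul_re, mul_im, h, zero_mul, zero_sub, Left.neg_pos_iff,
      mul_zero, add_zero, ne_eq, not_true_eq_false, or_false] at hw
    exact (mul_self_nonneg _).not_gt hw
  rcases hre.lt_or_gt with h | h
  · exact ⟨-z, by simpa using h, by rw [neg_sq, hz]⟩
  · exact ⟨z, h, hz⟩

lemma exists_mem_Ioo_cube_add_self_add_eq_zero {R : ℝ} (hR : 0 < R) :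
    ∃ t ∈ Set.Ioo (-R) 0, t ^ 3 + t + R = 0 := by
  have hcont : ContinuousOn (fun t : ℝ => t ^ 3 + t + R) (Set.Icc (-R) 0) := by fun_prop
  exact intermediate_value_Ioo (by linarith) hcont ⟨by nlinarith [pow_pos hR 3], by simpa⟩

lemma exists_quadratic_eq_mul_conj_of_sq_lt {b c : ℝ} (h : b ^ 2 < 4 * c) :
    ∃ ν : ℂ, ν.im ≠ 0 ∧ ∀ z : ℂ, z ^ 2 + b * z + c = (z - ν) * (z - conj ν) := by
  set s := Real.sqrt (4 * c - b ^ 2)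
  have hs : (s : ℂ) ^ 2 = 4 * c - b ^ 2 := by
    exact_mod_cast Real.sq_sqrt (by linarith : 0 ≤ 4 * c - b ^ 2)
  refine ⟨-b / 2 + s / 2 * I, ?_, fun z => ?_⟩
  · have : 0 < s := Real.sqrt_pos.mpr (by linarith)
    simpa using this.ne'
  · simp only [map_add, map_mul, map_div₀, map_neg, conj_ofReal, conj_I, map_ofNat]
    linear_combination (-1 / 4 : ℂ) * hs + (s : ℂ) ^ 2 / 4 * I_sq

/-- For `ξ ≠ 0`, the equation `-λ² - (λ² - |ξ|²)³ = 0` has exactly six roots counted with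
multiplicity, grouped as `±λ₁, ±λ₂, ±λ₃` with `λ₁` real positive, `Re λ₂, Re λ₃ > 0`,
and `λ₃ = conj λ₂`. -/
theorem characteristic_roots (ξ : EuclideanSpace ℝ (Fin 2)) (hξ : ξ ≠ 0) :
    ∃ lam₁ lam₂ lam₃ : ℂ,
      lam₁.im = 0 ∧ 0 < lam₁.re ∧ 0 < lam₂.re ∧ 0 < lam₃.re ∧
      lam₃ = starRingEnd ℂ lam₂ ∧
      ∀ lam : ℂ,
        -lam ^ 2 - (lam ^ 2 - ((‖ξ‖ : ℂ)) ^ 2) ^ 3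
          = -((lam - lam₁) * (lam + lam₁) * (lam - lam₂) * (lam + lam₂) *
              (lam - lam₃) * (lam + lam₃)) := by
  obtain ⟨t, ⟨ht, -⟩, hroot⟩ :=
    exists_mem_Ioo_cube_add_self_add_eq_zero (pow_pos (norm_pos_iff.mpr hξ) 2)
  obtain ⟨ν, hν, hfactor⟩ := exists_quadratic_eq_mul_conj_of_sq_lt (b := t) (c := t ^ 2 + 1)
    (by nlinarith)
  obtain ⟨lam₂, hre₂, hsq₂⟩ :=
    exists_pos_re_sq_eq_of_mem_slitPlane (w := ‖ξ‖ ^ 2 + ν)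
      (mem_slitPlane_iff.mpr (.inr (by simp [← ofReal_pow, hν])))
  have hpos₁ : 0 < t + ‖ξ‖ ^ 2 := by linarith
  have hsq₁ : ((√(t + ‖ξ‖ ^ 2) : ℝ) : ℂ) ^ 2 = t + ‖ξ‖ ^ 2 := by
    exact_mod_cast Real.sq_sqrt hpos₁.le
  have hsq₃ : conj lam₂ ^ 2 = ‖ξ‖ ^ 2 + conj ν := by
    rw [← map_pow, hsq₂, map_add, ← ofReal_pow, conj_ofReal]
  have hroot' : (t : ℂ) ^ 3 + t + (‖ξ‖ : ℂ) ^ 2 = 0 := by exact_mod_cast hroot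
  refine ⟨√(t + ‖ξ‖ ^ 2), lam₂, conj lam₂, by simp, by simpa using hpos₁, hre₂,
    by simpa using hre₂, rfl, fun lam => ?_⟩
  have hfactor' := hfactor (lam ^ 2 - ‖ξ‖ ^ 2)
  push_cast at hfactor'
  calc -lam ^ 2 - (lam ^ 2 - (‖ξ‖ : ℂ) ^ 2) ^ 3
      = -((lam ^ 2 - (t + ‖ξ‖ ^ 2)) *
          ((lam ^ 2 - ‖ξ‖ ^ 2) ^ 2 + t * (lam ^ 2 - ‖ξ‖ ^ 2) + (t ^ 2 + 1))) := by
        linear_combination -hroot'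
    _ = -((lam ^ 2 - (t + ‖ξ‖ ^ 2)) * (lam ^ 2 - (‖ξ‖ ^ 2 + ν)) *
          (lam ^ 2 - (‖ξ‖ ^ 2 + conj ν))) := by
        rw [hfactor']; ring
    _ = _ := by rw [← hsq₁, ← hsq₂, ← hsq₃]; ring
end

section
/- As ξ → 0 in ℝ², the roots λ₁(ξ), λ₂(ξ), λ₃(ξ) of -λ² - (λ²-|ξ|²)³ = 0 with positive real part (λ₁ real) satisfy λ₁(ξ) = |ξ|³ + O(|ξ|⁵), λ₂(ξ) = e^{iπ/4} + O(|ξ|²), λ₃(ξ) = e^{-iπ/4} + O(|ξ|²). -/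
/-!
Writing the equation as `λ² = (|ξ|² - λ²)³`, a positive real root is squeezed between
`|ξ|³ (1 - 2|ξ|²)` and `|ξ|³`. For a root in the open first quadrant, `w = λ² - |ξ|²` solves
`w³ + w + |ξ|² = 0` with `Im w > 0`; separating real and imaginary parts gives
`Im w = √(3 (Re w)² + 1)` and `2 Re w (4 (Re w)² + 1) = |ξ|²`, so `λ² = i + O(|ξ|²)`. Since
`Re (λ + e^{iπ/4}) ≥ √2/2`, the factorisation `λ² - i = (λ - e^{iπ/4}) (λ + e^{iπ/4})` transfers
this bound to `λ`. The third root is the conjugate of the second.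
-/

open Complex Asymptotics Filter Topology

lemma sq_one_sub_two_mul_le_cube_one_sub_sq {t : ℝ} (h0 : 0 ≤ t) (h : t ≤ 1/2) :
    (1 - 2 * t) ^ 2 ≤ (1 - t ^ 2) ^ 3 := by
  nlinarith [mul_nonneg h0 (sub_nonneg.2 h), pow_nonneg h0 4, mul_nonneg (pow_nonneg h0 3) h0]

lemma abs_sub_cube_le_of_sq_eq_cube {l r : ℝ} (hl : 0 < l) (hr : 0 < r)
    (heq : l ^ 2 = (r ^ 2 - l ^ 2) ^ 3) : |l - r ^ 3| ≤ 2 * r ^ 5 := by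
  have hu : 0 < r ^ 2 - l ^ 2 := by
    by_contra! h
    nlinarith [mul_nonneg (neg_nonneg.2 h) (sq_nonneg (r ^ 2 - l ^ 2))]
  have hupper : l ≤ r ^ 3 := by
    have := pow_le_pow_left₀ hu.le (by nlinarith : r ^ 2 - l ^ 2 ≤ r ^ 2) 3
    nlinarith [pow_pos hr 3]
  have hlower : r ^ 3 - 2 * r ^ 5 ≤ l := by
    rcases le_or_gt (r ^ 3 - 2 * r ^ 5) 0 with h | h
    · linarith
    have ht : r ^ 2 ≤ 1 / 2 := by nlinarith [pow_pos hr 3]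
    have hu' : (r ^ 2 - r ^ 6) ^ 3 ≤ l ^ 2 := by
      rw [heq]
      exact pow_le_pow_left₀ (by nlinarith) (by nlinarith [pow_pos hr 3]) 3
    have hpoly : (r ^ 3 - 2 * r ^ 5) ^ 2 ≤ (r ^ 2 - r ^ 6) ^ 3 := by
      have := mul_le_mul_of_nonneg_left (sq_one_sub_two_mul_le_cube_one_sub_sq (sq_nonneg r) ht)
        (by positivity : (0 : ℝ) ≤ (r ^ 2) ^ 3)
      nlinarith
    nlinarith
  exact abs_le.2 ⟨by linarith, by linarith [pow_pos hr 5]⟩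

lemma norm_add_sub_I_le_of_cubic_eq_zero {w : ℂ} {s : ℝ} (hs₀ : 0 ≤ s) (hs₁ : s ≤ 1)
    (him : 0 < w.im) (hw : w ^ 3 + w + s = 0) : ‖w + s - I‖ ≤ 2 * s := by
  obtain ⟨a, b⟩ := w
  simp only at him
  have hre : a ^ 3 - 3 * a * b ^ 2 + a + s = 0 := by
    have := congrArg Complex.re hw
    simp only [pow_succ, pow_zero, one_mul, add_re, mul_re, mul_im, ofReal_re, zero_re] at this
    linear_combination this
  have hwim : b * (3 * a ^ 2 - b ^ 2 + 1) = 0 := by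
    have := congrArg Complex.im hw
    simp only [pow_succ, pow_zero, one_mul, add_im, mul_im, mul_re, ofReal_im, add_zero,
      zero_im] at this
    linear_combination this
  have hb : b ^ 2 = 3 * a ^ 2 + 1 := by
    have := (mul_eq_zero.1 hwim).resolve_left him.ne'
    linarith
  have ha : 2 * a * (4 * a ^ 2 + 1) = s := by linear_combination -hre - 3 * a * hb
  have ha₀ : 0 ≤ a := by nlinarith [sq_nonneg a]
  have ha₁ : a ≤ s / 2 := by nlinarith [sq_nonneg a]
  have hb₁ : 1 ≤ b := by nlinarith
  have hb₂ : b - 1 ≤ 3 / 2 * a ^ 2 := by nlinarith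
  calc ‖(⟨a, b⟩ + s - I : ℂ)‖ ≤ |a + s| + |b - 1| := by
        simpa using Complex.norm_le_abs_re_add_abs_im (⟨a, b⟩ + s - I : ℂ)
    _ ≤ 2 * s := by
        rw [abs_of_nonneg (by linarith), abs_of_nonneg (by linarith)]
        nlinarith

lemma exp_I_mul_pi_div_four_sq : exp (I * Real.pi / 4) ^ 2 = I := by
  rw [← exp_nat_mul, show (2 : ℕ) * (I * Real.pi / 4) = Real.pi / 2 * I by push_cast; ring,
    exp_pi_div_two_mul_I]

lemma re_exp_I_mul_pi_div_four : (exp (I * Real.pi / 4)).re = √2 / 2 := by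
  rw [show I * Real.pi / 4 = ((Real.pi / 4 : ℝ) : ℂ) * I by push_cast; ring, exp_ofReal_mul_I_re,
    Real.cos_pi_div_four]

lemma exp_neg_I_mul_pi_div_four :
    exp (-(I * Real.pi) / 4) = starRingEnd ℂ (exp (I * Real.pi / 4)) := by
  rw [← exp_conj]
  congr 1
  simp [map_div₀, conj_I, map_ofNat]

lemma re_mul_norm_sub_le_norm_sq_sub {z ω : ℂ} (hz : 0 ≤ z.re) :
    ω.re * ‖z - ω‖ ≤ ‖z ^ 2 - ω ^ 2‖ := by
  have hsum : ω.re ≤ ‖z + ω‖ := by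
    calc ω.re ≤ (z + ω).re := by simp [hz]
      _ ≤ ‖z + ω‖ := re_le_norm _
  calc ω.re * ‖z - ω‖ ≤ ‖z + ω‖ * ‖z - ω‖ := by gcongr
    _ = ‖z ^ 2 - ω ^ 2‖ := by rw [← norm_mul]; ring_nf

lemma norm_sub_cube_le_of_real_root {l : ℂ} {r : ℝ} (hr : 0 < r) (him : l.im = 0)
    (hre : 0 < l.re) (heq : -l ^ 2 - (l ^ 2 - (r : ℂ) ^ 2) ^ 3 = 0) :
    ‖l - (r : ℂ) ^ 3‖ ≤ 2 * r ^ 5 := by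
  obtain ⟨x, rfl⟩ : ∃ x : ℝ, (x : ℂ) = l := ⟨l.re, Complex.ext rfl (by simp [him])⟩
  have hx : x ^ 2 = (r ^ 2 - x ^ 2) ^ 3 := by
    have : ((x ^ 2 - (r ^ 2 - x ^ 2) ^ 3 : ℝ) : ℂ) = 0 := by push_cast; linear_combination -heq
    linear_combination Complex.ofReal_eq_zero.mp this
  rw [← ofReal_pow, ← ofReal_sub, norm_real, Real.norm_eq_abs]
  exact abs_sub_cube_le_of_sq_eq_cube (by simpa using hre) hr hx

lemma norm_sub_exp_I_mul_pi_div_four_le_of_root {l : ℂ} {r : ℝ} (hr : r ^ 2 ≤ 1)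
    (hre : 0 < l.re) (him : 0 < l.im) (heq : -l ^ 2 - (l ^ 2 - (r : ℂ) ^ 2) ^ 3 = 0) :
    ‖l - exp (I * Real.pi / 4)‖ ≤ 3 * r ^ 2 := by
  have hwim : 0 < (l ^ 2 - (r : ℂ) ^ 2).im := by
    simp only [sq, sub_im, mul_im, ofReal_re, ofReal_im, mul_zero, zero_mul, add_zero, sub_zero]
    positivity
  have hsq : ‖l ^ 2 - I‖ ≤ 2 * r ^ 2 := by
    simpa using norm_add_sub_I_le_of_cubic_eq_zero (sq_nonneg r) hr hwim
      (by push_cast; linear_combination -heq)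
  have hfac := re_mul_norm_sub_le_norm_sq_sub (ω := exp (I * Real.pi / 4)) hre.le
  rw [re_exp_I_mul_pi_div_four, exp_I_mul_pi_div_four_sq] at hfac
  have hsqrt : (4 : ℝ) / 3 ≤ √2 := by
    rw [Real.le_sqrt (by norm_num) (by norm_num)]; norm_num
  nlinarith [norm_nonneg (l - exp (I * Real.pi / 4))]

lemma isBigO_nhdsNE_zero_of_norm_le {E F : Type*} [NormedAddCommGroup E] [NormedAddCommGroup F]
    {f : E → F} {C : ℝ} {n : ℕ} (hf : ∀ x, x ≠ 0 → ‖x‖ ≤ 1 → ‖f x‖ ≤ C * ‖x‖ ^ n) :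
    f =O[𝓝[≠] 0] (fun x => ‖x‖ ^ n) := by
  refine IsBigO.of_bound C ?_
  filter_upwards [nhdsWithin_le_nhds (Metric.closedBall_mem_nhds (0 : E) one_pos),
    self_mem_nhdsWithin] with x hx hne
  simpa using hf x hne (mem_closedBall_zero_iff.1 hx)

/-- Asymptotics as `ξ → 0` of the roots with positive real part of
`-λ² - (λ² - |ξ|²)³ = 0`. -/
theorem roots_asymptotics_low (lam₁ lam₂ lam₃ : EuclideanSpace ℝ (Fin 2) → ℂ)
    (hroot : ∀ ξ : EuclideanSpace ℝ (Fin 2), ξ ≠ 0 → ∀ i : Fin 3,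
      -(![lam₁, lam₂, lam₃] i ξ) ^ 2
        - ((![lam₁, lam₂, lam₃] i ξ) ^ 2 - ((‖ξ‖ : ℂ)) ^ 2) ^ 3 = 0)
    (h₁ : ∀ ξ, ξ ≠ 0 → (lam₁ ξ).im = 0 ∧ 0 < (lam₁ ξ).re)
    (h₂ : ∀ ξ, ξ ≠ 0 → 0 < (lam₂ ξ).re ∧ 0 < (lam₂ ξ).im)
    (h₃ : ∀ ξ, ξ ≠ 0 → lam₃ ξ = starRingEnd ℂ (lam₂ ξ)) :
    (fun ξ : EuclideanSpace ℝ (Fin 2) => lam₁ ξ - ((‖ξ‖ : ℂ)) ^ 3)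
        =O[𝓝[≠] 0] (fun ξ => ‖ξ‖ ^ 5) ∧
    (fun ξ : EuclideanSpace ℝ (Fin 2) => lam₂ ξ - Complex.exp (Complex.I * Real.pi / 4))
        =O[𝓝[≠] 0] (fun ξ => ‖ξ‖ ^ 2) ∧
    (fun ξ : EuclideanSpace ℝ (Fin 2) => lam₃ ξ - Complex.exp (-(Complex.I * Real.pi) / 4))
        =O[𝓝[≠] 0] (fun ξ => ‖ξ‖ ^ 2) := by
  have hlam₂ : ∀ ξ : EuclideanSpace ℝ (Fin 2), ξ ≠ 0 → ‖ξ‖ ≤ 1 →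
      ‖lam₂ ξ - exp (I * Real.pi / 4)‖ ≤ 3 * ‖ξ‖ ^ 2 := fun ξ hξ hξ₁ =>
    norm_sub_exp_I_mul_pi_div_four_le_of_root (pow_le_one₀ (norm_nonneg ξ) hξ₁)
      (h₂ ξ hξ).1 (h₂ ξ hξ).2 (hroot ξ hξ 1)
  refine ⟨isBigO_nhdsNE_zero_of_norm_le (C := 2) fun ξ hξ _ => ?_,
    isBigO_nhdsNE_zero_of_norm_le hlam₂,
    isBigO_nhdsNE_zero_of_norm_le (C := 3) fun ξ hξ hξ₁ => ?_⟩
  · exact norm_sub_cube_le_of_real_root (norm_pos_iff.2 hξ) (h₁ ξ hξ).1 (h₁ ξ hξ).2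
      (hroot ξ hξ 0)
  · rw [h₃ ξ hξ, exp_neg_I_mul_pi_div_four, ← map_sub, norm_conj]
    exact hlam₂ ξ hξ hξ₁
end

section
/- As |ξ| → ∞, the roots of -λ² - (λ²-|ξ|²)³ = 0 with positive real part satisfy λ₁(ξ) = |ξ| - (1/2)|ξ|^{-1/3} + O(|ξ|^{-5/3}), λ₂(ξ) = |ξ| - (j²/2)|ξ|^{-1/3} + O(|ξ|^{-5/3}), λ₃(ξ) = |ξ| - (j/2)|ξ|^{-1/3} + O(|ξ|^{-5/3}), where j = e^{2iπ/3}. -/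
/-!
Put `s = |ξ|^{1/3}` and `u = λ² - s⁶`; the equation becomes `u³ + u + s⁶ = 0`. Since
`u³ + s⁶ = (u + s²)(u - ζ₆ s²)(u - conj ζ₆ s²)` with `ζ₆ = e^{iπ/3}`, the product of the three
distances from `u` to the cube roots of `-s⁶` equals `‖u‖ ≤ 2s²`. These roots are `√3 s²` apart,
so once `u` is kept `(√3/2) s²` away from two of them it lies within `O(s⁻²)` of the third; the
sign of `im u = 2 re λ im λ` decides which one. Taking the square root with positive real part
then gives `λ = s³ + ω/(2s) + O(s⁻⁵)` for the selected root `ω s²`, and the expansion of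
`λ₃ = conj λ₂` is the conjugate of that of `λ₂`.
-/

open Complex Asymptotics Filter ComplexConjugate

noncomputable def ζ₆ : ℂ := ⟨1 / 2, √3 / 2⟩

lemma ζ₆_im : ζ₆.im = √3 / 2 := rfl

lemma ζ₆_add_conj : ζ₆ + conj ζ₆ = 1 := by
  norm_num [Complex.ext_iff, ζ₆]

lemma normSq_ζ₆ : normSq ζ₆ = 1 := by
  rw [normSq_apply]
  norm_num [ζ₆, ← sq, div_pow]

lemma ζ₆_mul_conj : ζ₆ * conj ζ₆ = 1 := by
  rw [mul_conj, normSq_ζ₆, ofReal_one]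

lemma norm_ζ₆ : ‖ζ₆‖ = 1 := by
  rw [← sq_eq_sq₀ (norm_nonneg _) zero_le_one, ← normSq_eq_norm_sq, normSq_ζ₆, one_pow]

lemma cexp_two_pi_I_div_three : cexp (2 * Real.pi * I / 3) = -conj ζ₆ := by
  have harg : 2 * (Real.pi : ℂ) * I / 3 = ((Real.pi - Real.pi / 3 : ℝ) : ℂ) * I := by
    push_cast; ring
  rw [harg, exp_mul_I, ← ofReal_cos, ← ofReal_sin, Real.cos_pi_sub, Real.sin_pi_sub,
    Real.cos_pi_div_three, Real.sin_pi_div_three]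
  apply Complex.ext <;> simp [ζ₆]

lemma cexp_two_pi_I_div_three_sq : cexp (2 * Real.pi * I / 3) ^ 2 = -ζ₆ := by
  rw [cexp_two_pi_I_div_three]
  linear_combination (conj ζ₆ + 1) * ζ₆_add_conj - ζ₆_mul_conj

lemma add_sq_mul_sub_ζ₆_mul_sub_conj (u S : ℂ) :
    (u + S ^ 2) * (u - ζ₆ * S ^ 2) * (u - conj ζ₆ * S ^ 2) = u ^ 3 + S ^ 6 := by
  linear_combination
    (-(S ^ 2 * u ^ 2) - S ^ 4 * u) * ζ₆_add_conj + (S ^ 4 * u + S ^ 6) * ζ₆_mul_conj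

section Cubic

variable {s : ℝ} {u : ℂ}

lemma norm_le_of_cubic_eq (hs : 2 ≤ s) (hu : u ^ 3 + u + (s : ℂ) ^ 6 = 0) :
    ‖u‖ ≤ 2 * s ^ 2 := by
  have hcube : ‖u‖ ^ 3 ≤ ‖u‖ + s ^ 6 := by
    calc ‖u‖ ^ 3 = ‖u + (s : ℂ) ^ 6‖ := by
          rw [← norm_pow, show u ^ 3 = -(u + (s : ℂ) ^ 6) by linear_combination hu, norm_neg]
      _ ≤ ‖u‖ + s ^ 6 := by
          grw [norm_add_le, norm_pow, norm_real, Real.norm_of_nonneg (by linarith)]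
  by_contra! hgt
  -- `t ↦ t³ - t` is increasing for `t ≥ 1` and already exceeds `s⁶` at `t = 2s²`
  have h8 : 8 < ‖u‖ := by nlinarith
  have hpos : 0 < ‖u‖ ^ 2 + ‖u‖ * (2 * s ^ 2) + (2 * s ^ 2) ^ 2 - 1 := by nlinarith
  nlinarith [mul_pos (sub_pos.2 hgt) hpos, pow_le_pow_left₀ (by norm_num) hs 4]

lemma norm_sub_le_of_cubic_eq (hs : 2 ≤ s) (hu : u ^ 3 + u + (s : ℂ) ^ 6 = 0) {a b c : ℂ}
    (hfac : (u - a) * (u - b) * (u - c) = u ^ 3 + (s : ℂ) ^ 6)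
    (hb : √3 / 2 * s ^ 2 ≤ ‖u - b‖) (hc : √3 / 2 * s ^ 2 ≤ ‖u - c‖) :
    ‖u - a‖ ≤ 3 / s ^ 2 := by
  have hprod : ‖u - a‖ * (‖u - b‖ * ‖u - c‖) = ‖u‖ := by
    rw [← norm_mul, ← norm_mul, ← mul_assoc, hfac,
      show u ^ 3 + (s : ℂ) ^ 6 = -u by linear_combination hu, norm_neg]
  have hbc : 3 / 4 * s ^ 4 ≤ ‖u - b‖ * ‖u - c‖ := by
    calc 3 / 4 * s ^ 4 = (√3 / 2 * s ^ 2) * (√3 / 2 * s ^ 2) := by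
          rw [show (√3 / 2 * s ^ 2) * (√3 / 2 * s ^ 2) = √3 ^ 2 / 4 * s ^ 4 by ring,
            Real.sq_sqrt (by norm_num)]
      _ ≤ ‖u - b‖ * ‖u - c‖ := mul_le_mul hb hc (by positivity) (norm_nonneg _)
  have hs0 : 0 < s := by linarith
  rw [le_div_iff₀ (by positivity)]
  nlinarith [norm_le_of_cubic_eq hs hu, mul_le_mul_of_nonneg_left hbc (norm_nonneg (u - a))]

lemma im_mul_cubic_eq_zero (hu : u ^ 3 + u + (s : ℂ) ^ 6 = 0) :
    u.im * (3 * u.re ^ 2 - u.im ^ 2 + 1) = 0 := by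
  have him := congrArg im hu
  rw [← ofReal_pow] at him
  simp only [add_im, ofReal_im, zero_im, pow_succ, pow_zero, one_mul, mul_im, mul_re] at him
  linear_combination him

lemma sqrt_three_div_two_mul_sq_le_norm_add (hu : u ^ 3 + u + (s : ℂ) ^ 6 = 0)
    (him : u.im ≠ 0) : √3 / 2 * s ^ 2 ≤ ‖u + (s : ℂ) ^ 2‖ := by
  have hy : u.im ^ 2 = 3 * u.re ^ 2 + 1 := by
    have := (mul_eq_zero.1 (im_mul_cubic_eq_zero hu)).resolve_left him
    linarith
  rw [← pow_le_pow_iff_left₀ (by positivity) (norm_nonneg _) two_ne_zero, Complex.sq_norm,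
    normSq_apply, ← ofReal_pow, add_re, add_im, ofReal_re, ofReal_im]
  nlinarith [Real.sq_sqrt (show (0 : ℝ) ≤ 3 by norm_num), sq_nonneg (2 * u.re + s ^ 2 / 2)]

lemma im_sub_ζ₆_mul_sq : (u - ζ₆ * (s : ℂ) ^ 2).im = u.im - √3 / 2 * s ^ 2 := by
  rw [← ofReal_pow, sub_im, im_mul_ofReal, ζ₆_im]

lemma im_sub_conj_ζ₆_mul_sq : (u - conj ζ₆ * (s : ℂ) ^ 2).im = u.im + √3 / 2 * s ^ 2 := by
  rw [← ofReal_pow, sub_im, im_mul_ofReal, conj_im, ζ₆_im]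
  ring

lemma norm_add_sq_le_of_im_eq_zero (hs : 2 ≤ s) (hu : u ^ 3 + u + (s : ℂ) ^ 6 = 0)
    (him : u.im = 0) : ‖u + (s : ℂ) ^ 2‖ ≤ 3 / s ^ 2 := by
  rw [← sub_neg_eq_add]
  refine norm_sub_le_of_cubic_eq hs hu (b := ζ₆ * (s : ℂ) ^ 2) (c := conj ζ₆ * (s : ℂ) ^ 2)
    (by rw [← add_sq_mul_sub_ζ₆_mul_sub_conj, sub_neg_eq_add]) ?_ ?_
  · calc √3 / 2 * s ^ 2 = |(u - ζ₆ * (s : ℂ) ^ 2).im| := by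
          rw [im_sub_ζ₆_mul_sq, him, zero_sub, abs_neg, abs_of_nonneg (by positivity)]
      _ ≤ _ := abs_im_le_norm _
  · calc √3 / 2 * s ^ 2 = |(u - conj ζ₆ * (s : ℂ) ^ 2).im| := by
          rw [im_sub_conj_ζ₆_mul_sq, him, zero_add, abs_of_nonneg (by positivity)]
      _ ≤ _ := abs_im_le_norm _

lemma norm_sub_ζ₆_mul_sq_le_of_im_pos (hs : 2 ≤ s) (hu : u ^ 3 + u + (s : ℂ) ^ 6 = 0)
    (him : 0 < u.im) : ‖u - ζ₆ * (s : ℂ) ^ 2‖ ≤ 3 / s ^ 2 := by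
  refine norm_sub_le_of_cubic_eq hs hu (b := -(s : ℂ) ^ 2) (c := conj ζ₆ * (s : ℂ) ^ 2)
    (by rw [← add_sq_mul_sub_ζ₆_mul_sub_conj]; ring) ?_ ?_
  · rw [sub_neg_eq_add]
    exact sqrt_three_div_two_mul_sq_le_norm_add hu him.ne'
  · calc √3 / 2 * s ^ 2 ≤ |(u - conj ζ₆ * (s : ℂ) ^ 2).im| := by
          rw [im_sub_conj_ζ₆_mul_sq, abs_of_pos (by positivity)]
          linarith
      _ ≤ _ := abs_im_le_norm _

end Cubic

section Roots

variable {s : ℝ} {l : ℂ}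

lemma norm_sub_cube_sub_div_le (hs : 2 ≤ s) (hre : 0 < l.re) {ω : ℂ} (hω : ‖ω‖ = 1)
    (hl : ‖l ^ 2 - (s : ℂ) ^ 6 - ω * (s : ℂ) ^ 2‖ ≤ 3 / s ^ 2) :
    ‖l - (s : ℂ) ^ 3 - ω / (2 * s)‖ ≤ 4 / s ^ 5 := by
  have hs0 : 0 < s := by linarith
  have hnorm_s : ‖(s : ℂ)‖ = s := by rw [norm_real, Real.norm_of_nonneg hs0.le]
  have hplus : s ^ 3 ≤ ‖l + (s : ℂ) ^ 3‖ := by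
    refine le_trans ?_ (re_le_norm _)
    rw [add_re, ← ofReal_pow, ofReal_re]
    linarith
  have hu : ‖l ^ 2 - (s : ℂ) ^ 6‖ ≤ 2 * s ^ 2 := by
    calc ‖l ^ 2 - (s : ℂ) ^ 6‖ ≤ ‖l ^ 2 - (s : ℂ) ^ 6 - ω * (s : ℂ) ^ 2‖ + ‖ω * (s : ℂ) ^ 2‖ :=
          norm_le_norm_sub_add _ _
      _ ≤ 3 / s ^ 2 + s ^ 2 := by rw [norm_mul, norm_pow, hω, hnorm_s, one_mul]; linarith
      _ ≤ 2 * s ^ 2 := by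
          rw [div_add' _ _ _ (by positivity), div_le_iff₀ (by positivity)]
          nlinarith [pow_le_pow_left₀ (by norm_num) hs 4]
  -- `l - s³ = (l² - s⁶) / (l + s³)`, and `l + s³` is large because `re l > 0`
  have hminus : ‖l - (s : ℂ) ^ 3‖ ≤ 2 / s := by
    have hmul : ‖l - (s : ℂ) ^ 3‖ * ‖l + (s : ℂ) ^ 3‖ = ‖l ^ 2 - (s : ℂ) ^ 6‖ := by
      rw [← norm_mul]; ring_nf
    rw [le_div_iff₀ hs0]
    nlinarith [norm_nonneg (l - (s : ℂ) ^ 3), pow_pos hs0 3]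
  have hplus0 : l + (s : ℂ) ^ 3 ≠ 0 := by
    rw [← norm_pos_iff]; exact lt_of_lt_of_le (by positivity) hplus
  have hsC : (s : ℂ) ≠ 0 := ofReal_ne_zero.2 hs0.ne'
  have hsplit : l - (s : ℂ) ^ 3 - ω / (2 * s) =
      (2 * s * (l ^ 2 - (s : ℂ) ^ 6 - ω * (s : ℂ) ^ 2) - ω * (l - (s : ℂ) ^ 3)) /
        (2 * s * (l + (s : ℂ) ^ 3)) := by
    field_simp
    ring
  have hnum : ‖2 * s * (l ^ 2 - (s : ℂ) ^ 6 - ω * (s : ℂ) ^ 2) - ω * (l - (s : ℂ) ^ 3)‖ ≤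
      8 / s := by
    calc _ ≤ 2 * s * ‖l ^ 2 - (s : ℂ) ^ 6 - ω * (s : ℂ) ^ 2‖ + ‖l - (s : ℂ) ^ 3‖ := by
          grw [norm_sub_le, norm_mul, norm_mul, norm_mul, hnorm_s, hω, Complex.norm_two, one_mul]
      _ ≤ 2 * s * (3 / s ^ 2) + 2 / s := by gcongr
      _ = 8 / s := by field_simp; ring
  have hden : 2 * s ^ 4 ≤ ‖2 * s * (l + (s : ℂ) ^ 3)‖ := by
    rw [norm_mul, norm_mul, hnorm_s, Complex.norm_two]
    nlinarith
  rw [hsplit, norm_div]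
  calc _ ≤ (8 / s) / (2 * s ^ 4) := div_le_div₀ (by positivity) hnum (by positivity) hden
    _ = 4 / s ^ 5 := by field_simp; ring

lemma im_sq_sub_ofReal_pow : (l ^ 2 - (s : ℂ) ^ 6).im = 2 * l.re * l.im := by
  rw [← ofReal_pow, sub_im, ofReal_im, sq, mul_im]
  ring

lemma cubic_eq_of_root (hl : -l ^ 2 - (l ^ 2 - (s : ℂ) ^ 6) ^ 3 = 0) :
    (l ^ 2 - (s : ℂ) ^ 6) ^ 3 + (l ^ 2 - (s : ℂ) ^ 6) + (s : ℂ) ^ 6 = 0 := by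
  linear_combination -hl

lemma norm_real_root_sub_le (hs : 2 ≤ s) (hl : -l ^ 2 - (l ^ 2 - (s : ℂ) ^ 6) ^ 3 = 0)
    (hre : 0 < l.re) (him : l.im = 0) :
    ‖l - (s : ℂ) ^ 3 - (-1) / (2 * s)‖ ≤ 4 / s ^ 5 := by
  refine norm_sub_cube_sub_div_le hs hre (by norm_num) ?_
  rw [neg_one_mul, sub_neg_eq_add]
  exact norm_add_sq_le_of_im_eq_zero hs (cubic_eq_of_root hl)
    (by rw [im_sq_sub_ofReal_pow, him, mul_zero])

lemma norm_upper_root_sub_le (hs : 2 ≤ s) (hl : -l ^ 2 - (l ^ 2 - (s : ℂ) ^ 6) ^ 3 = 0)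
    (hre : 0 < l.re) (him : 0 < l.im) :
    ‖l - (s : ℂ) ^ 3 - ζ₆ / (2 * s)‖ ≤ 4 / s ^ 5 :=
  norm_sub_cube_sub_div_le hs hre norm_ζ₆ <|
    norm_sub_ζ₆_mul_sq_le_of_im_pos hs (cubic_eq_of_root hl)
      (by rw [im_sq_sub_ofReal_pow]; positivity)

end Roots

lemma pow_three_rpow_div_three {s : ℝ} (hs : 0 ≤ s) (a : ℝ) : (s ^ 3) ^ (a / 3) = s ^ a := by
  rw [← Real.rpow_natCast_mul hs, Nat.cast_ofNat, mul_div_cancel₀ _ three_ne_zero]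

lemma isBigO_comap_norm_of_cube_bound {E : Type*} [Norm E] {f : E → ℂ} {ω : ℂ}
    (h : ∀ (ξ : E) (s : ℝ), 2 ≤ s → ‖ξ‖ = s ^ 3 → ‖f ξ - (s : ℂ) ^ 3 - ω / (2 * s)‖ ≤ 4 / s ^ 5) :
    (fun ξ : E => f ξ - (‖ξ‖ : ℂ) - ω / 2 * ((‖ξ‖ ^ (-(1:ℝ)/3) : ℝ) : ℂ))
      =O[comap (fun ξ => ‖ξ‖) atTop] (fun ξ => ‖ξ‖ ^ (-(5:ℝ)/3)) := by
  refine isBigO_iff.2 ⟨4, ?_⟩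
  filter_upwards [tendsto_comap.eventually (eventually_ge_atTop 8)] with ξ hξ
  obtain ⟨s, hs0, hs3⟩ : ∃ s : ℝ, 0 ≤ s ∧ ‖ξ‖ = s ^ 3 :=
    ⟨_, by positivity, (Real.rpow_inv_natCast_pow (by linarith) three_ne_zero).symm⟩
  have hs : 2 ≤ s := by
    rw [← pow_le_pow_iff_left₀ zero_le_two hs0 three_ne_zero]
    linarith
  rw [hs3, pow_three_rpow_div_three hs0, pow_three_rpow_div_three hs0, Real.rpow_neg_one,
    Real.rpow_neg hs0, Real.rpow_ofNat, Real.norm_of_nonneg (by positivity)]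
  convert h ξ s hs hs3 using 2
  · push_cast; ring
  · ring

/-- Asymptotics as `|ξ| → ∞` of the roots with positive real part of
`-λ² - (λ² - |ξ|²)³ = 0`, where `j = e^{2iπ/3}`. -/
theorem roots_asymptotics_high (lam₁ lam₂ lam₃ : EuclideanSpace ℝ (Fin 2) → ℂ)
    (hroot : ∀ ξ : EuclideanSpace ℝ (Fin 2), ξ ≠ 0 → ∀ i : Fin 3,
      -(![lam₁, lam₂, lam₃] i ξ) ^ 2
        - ((![lam₁, lam₂, lam₃] i ξ) ^ 2 - ((‖ξ‖ : ℂ)) ^ 2) ^ 3 = 0)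
    (h₁ : ∀ ξ, ξ ≠ 0 → (lam₁ ξ).im = 0 ∧ 0 < (lam₁ ξ).re)
    (h₂ : ∀ ξ, ξ ≠ 0 → 0 < (lam₂ ξ).re ∧ 0 < (lam₂ ξ).im)
    (h₃ : ∀ ξ, ξ ≠ 0 → lam₃ ξ = starRingEnd ℂ (lam₂ ξ)) :
    letI j : ℂ := Complex.exp (2 * Real.pi * Complex.I / 3)
    letI F : Filter (EuclideanSpace ℝ (Fin 2)) :=
      Filter.comap (fun ξ => ‖ξ‖) Filter.atTop
    ((fun ξ : EuclideanSpace ℝ (Fin 2) =>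
        lam₁ ξ - (‖ξ‖ : ℂ) + (1/2 : ℂ) * ((‖ξ‖ ^ (-(1:ℝ)/3) : ℝ) : ℂ))
        =O[F] (fun ξ => ‖ξ‖ ^ (-(5:ℝ)/3))) ∧
    ((fun ξ : EuclideanSpace ℝ (Fin 2) =>
        lam₂ ξ - (‖ξ‖ : ℂ) + (j ^ 2 / 2) * ((‖ξ‖ ^ (-(1:ℝ)/3) : ℝ) : ℂ))
        =O[F] (fun ξ => ‖ξ‖ ^ (-(5:ℝ)/3))) ∧
    ((fun ξ : EuclideanSpace ℝ (Fin 2) =>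
        lam₃ ξ - (‖ξ‖ : ℂ) + (j / 2) * ((‖ξ‖ ^ (-(1:ℝ)/3) : ℝ) : ℂ))
        =O[F] (fun ξ => ‖ξ‖ ^ (-(5:ℝ)/3))) := by
  have hne : ∀ ξ : EuclideanSpace ℝ (Fin 2), ∀ s : ℝ, 2 ≤ s → ‖ξ‖ = s ^ 3 → ξ ≠ 0 :=
    fun ξ s hs hξ => norm_pos_iff.1 (by rw [hξ]; positivity)
  have hroot_cube : ∀ ξ s, 2 ≤ s → ‖ξ‖ = s ^ 3 → ∀ i : Fin 3,
      -(![lam₁, lam₂, lam₃] i ξ) ^ 2 - ((![lam₁, lam₂, lam₃] i ξ) ^ 2 - (s : ℂ) ^ 6) ^ 3 = 0 :=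
    fun ξ s hs hξ i => by simpa [hξ, ← pow_mul] using hroot ξ (hne ξ s hs hξ) i
  have hF₁ : (fun ξ => lam₁ ξ - (‖ξ‖ : ℂ) + (1/2 : ℂ) * ((‖ξ‖ ^ (-(1:ℝ)/3) : ℝ) : ℂ))
      =O[comap (fun ξ => ‖ξ‖) atTop] (fun ξ => ‖ξ‖ ^ (-(5:ℝ)/3)) := by
    refine (isBigO_comap_norm_of_cube_bound (f := lam₁) (ω := -1) fun ξ s hs hξ => ?_).congr_left
      fun ξ => by ring
    obtain ⟨him, hre⟩ := h₁ ξ (hne ξ s hs hξ)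
    exact norm_real_root_sub_le hs (by simpa using hroot_cube ξ s hs hξ 0) hre him
  have hF₂ : (fun ξ => lam₂ ξ - (‖ξ‖ : ℂ)
        + (cexp (2 * Real.pi * I / 3) ^ 2 / 2) * ((‖ξ‖ ^ (-(1:ℝ)/3) : ℝ) : ℂ))
      =O[comap (fun ξ => ‖ξ‖) atTop] (fun ξ => ‖ξ‖ ^ (-(5:ℝ)/3)) := by
    refine (isBigO_comap_norm_of_cube_bound (f := lam₂) (ω := ζ₆) fun ξ s hs hξ => ?_).congr_left
      fun ξ => by rw [cexp_two_pi_I_div_three_sq]; ring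
    obtain ⟨hre, him⟩ := h₂ ξ (hne ξ s hs hξ)
    exact norm_upper_root_sub_le hs (by simpa using hroot_cube ξ s hs hξ 1) hre him
  refine ⟨hF₁, hF₂, (hF₂.norm_left.congr' ?_ EventuallyEq.rfl).of_norm_left⟩
  filter_upwards [tendsto_comap.eventually (eventually_gt_atTop 0)] with ξ hξ
  rw [h₃ ξ (norm_pos_iff.1 hξ), ← norm_conj, cexp_two_pi_I_div_three_sq, cexp_two_pi_I_div_three]
  simp [map_ofNat]
end

section
/- Let E: ℕ → [0,∞) be nondecreasing and suppose there exist constants C > 0 and A ≥ 0 such that for all k ≥ 1, E(k) ≤ C((E(k+1)-E(k))^{3/2} + (E(k+1)-E(k)) + A²(k+1)²), and suppose additionally E(n) ≤ C₀ n for all n. Then there exists a constant C' (depending only on C, C₀) such that E(k) ≤ C' A² k² for all k ≥ 1, provided A ≤ 1. -/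
/-!
If `E k > C' A² k²`, then at `k₀ = k (N + 1)` the bound `E m ≥ 8CA²(m+1)²` holds, and it
propagates forward: it lets the recurrence absorb its source term, `E m ≤ 2C(δ^{3/2} + δ)` with
`δ = E (m+1) - E m`, and once `m ≥ N` this is impossible with an increment `δ < 8CA²(2m+3)`.
So `0 < E k₀` and `E m ≤ 4C(δ + δ²)` for all `m ≥ k₀`, which rules out linear growth of `E`.
-/

lemma rpow_three_halves_le_add_sq {x : ℝ} (hx : 0 ≤ x) : x ^ ((3 : ℝ) / 2) ≤ x + x ^ 2 := by
  rcases le_total x 1 with h | h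
  · have := Real.rpow_le_rpow_of_exponent_ge' hx h zero_le_one (by norm_num : (1 : ℝ) ≤ 3 / 2)
    rw [Real.rpow_one] at this
    nlinarith
  · have := Real.rpow_le_rpow_of_exponent_le h (by norm_num : (3 : ℝ) / 2 ≤ (2 : ℕ))
    rw [Real.rpow_natCast] at this
    linarith

lemma rpow_three_halves_sq {x : ℝ} (hx : 0 ≤ x) : (x ^ ((3 : ℝ) / 2)) ^ 2 = x ^ 3 := by
  rw [← Real.rpow_mul_natCast hx, ← Real.rpow_natCast x 3]
  norm_num

section Increments

variable {E : ℕ → ℝ}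

lemma add_mul_le_of_le_sub {M : ℕ} {c : ℝ} (h : ∀ m ≥ M, c ≤ E (m + 1) - E m) (j : ℕ) :
    E M + c * j ≤ E (M + j) := by
  induction j with
  | zero => simp
  | succ j ih =>
    have := h (M + j) (Nat.le_add_right M j)
    push_cast
    rw [← add_assoc]
    linarith

lemma exists_sub_lt_of_le_add_mul {a b ε : ℝ} (hE : ∀ n, E n ≤ a + b * n) (hε : 0 < ε)
    (M : ℕ) : ∃ m ≥ M, E (m + 1) - E m < b + ε := by
  by_contra! h
  obtain ⟨j, hj⟩ := exists_nat_gt ((a + b * M - E M) / ε)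
  rw [div_lt_iff₀ hε] at hj
  have := add_mul_le_of_le_sub h j
  have := hE (M + j)
  push_cast at this
  linarith

/-- The increments are infinitely often below `b + 1`, which bounds `E`; then they are
infinitely often arbitrarily small. -/
lemma Monotone.le_zero_of_le_mul_sub_add_sq {a b K : ℝ} {M : ℕ} (hE : Monotone E)
    (hlin : ∀ n, E n ≤ a + b * n) (hK : 0 < K)
    (h : ∀ m ≥ M, E m ≤ K * ((E (m + 1) - E m) + (E (m + 1) - E m) ^ 2)) : E M ≤ 0 := by
  have hinc : ∀ m, 0 ≤ E (m + 1) - E m := fun m => sub_nonneg.mpr (hE m.le_succ)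
  have hbdd : ∀ n, E n ≤ K * ((b + 1) + (b + 1) ^ 2) := by
    intro n
    obtain ⟨m, hm, hδ⟩ := exists_sub_lt_of_le_add_mul hlin one_pos (max n M)
    have hδ0 := hinc m
    calc E n ≤ E m := hE (le_of_max_le_left hm)
      _ ≤ K * ((E (m + 1) - E m) + (E (m + 1) - E m) ^ 2) := h m (le_of_max_le_right hm)
      _ ≤ K * ((b + 1) + (b + 1) ^ 2) := by gcongr
  by_contra! hpos
  set ε := min 1 (E M / (4 * K))
  have hε : 0 < ε := lt_min one_pos (by positivity)
  obtain ⟨m, hm, hδ⟩ := exists_sub_lt_of_le_add_mul (b := 0) (fun n => by simpa using hbdd n) hε M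
  have hδ0 := hinc m
  have hε4K : 4 * K * ε ≤ E M := by
    have := min_le_right 1 (E M / (4 * K))
    rwa [le_div_iff₀ (by positivity), mul_comm] at this
  have hδ1 : E (m + 1) - E m ≤ 1 := by linarith [min_le_left 1 (E M / (4 * K))]
  have := h m hm
  have := hE hm
  nlinarith [mul_le_mul_of_nonneg_left hδ1 hδ0]

end Increments

namespace SaintVenant

def Recurrence (C A : ℝ) (E : ℕ → ℝ) : Prop :=
  ∀ k : ℕ, 1 ≤ k →
    E k ≤ C * ((E (k + 1) - E k) ^ ((3 : ℝ) / 2) + (E (k + 1) - E k) + A ^ 2 * (k + 1) ^ 2)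

lemma one_le_of_threshold_le {C : ℝ} (hC : 0 < C) {k : ℕ}
    (hk : 1 + 12 * C + 3456 * C ^ 3 ≤ k) : 1 ≤ k := by
  have : (1 : ℝ) ≤ k := by nlinarith [pow_pos hC 3]
  exact_mod_cast this

/-- An increment `δ < 8CA²(2x+1)` would be `≤ 2A²x²` (as `x ≥ 12C`), so `δ^{3/2} ≥ 2A²x²`;
cubing against `δ < 24CA²x` and using `A ≤ 1` forces `x < 3456C³`. -/
lemma mul_two_mul_add_one_le {C A x δ : ℝ} (hC : 0 < C) (hA0 : 0 ≤ A) (hA1 : A ≤ 1)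
    (hx : 1 + 12 * C + 3456 * C ^ 3 ≤ x) (hδ : 0 ≤ δ)
    (h : 4 * A ^ 2 * x ^ 2 ≤ δ ^ ((3 : ℝ) / 2) + δ) : 8 * C * A ^ 2 * (2 * x + 1) ≤ δ := by
  by_contra! hlt
  have hA : 0 < A := by
    rcases hA0.eq_or_lt with rfl | hA
    · norm_num at hlt; linarith
    · exact hA
  have hx1 : 1 ≤ x := by nlinarith [pow_pos hC 3]
  have hδ_lt : δ < 24 * C * A ^ 2 * x := by nlinarith [mul_pos hC (pow_pos hA 2)]
  have hδ_le : δ ≤ 2 * A ^ 2 * x ^ 2 := by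
    have hx12 : 0 ≤ x - 12 * C := by nlinarith [pow_pos hC 3]
    nlinarith [mul_nonneg (by positivity : 0 ≤ A ^ 2 * x) hx12]
  have hcube_ge : (2 * A ^ 2 * x ^ 2) ^ 2 ≤ δ ^ 3 := by
    rw [← rpow_three_halves_sq hδ]
    gcongr
    linarith
  have hcube_lt : δ ^ 3 < 13824 * C ^ 3 * A ^ 4 * x ^ 3 := by
    have hA6 : A ^ 6 ≤ A ^ 4 := pow_le_pow_of_le_one hA0 hA1 (by norm_num)
    calc δ ^ 3 < (24 * C * A ^ 2 * x) ^ 3 := by gcongr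
      _ = 13824 * C ^ 3 * A ^ 6 * x ^ 3 := by ring
      _ ≤ 13824 * C ^ 3 * A ^ 4 * x ^ 3 := by gcongr
  have : x < 3456 * C ^ 3 := by
    have hpos : 0 < 4 * A ^ 4 * x ^ 3 := by positivity
    nlinarith
  nlinarith [pow_pos hC 3]

variable {C A : ℝ} {E : ℕ → ℝ}

lemma le_two_mul_of_source_le (hC : 0 < C) (hrec : Recurrence C A E) {m : ℕ} (hm : 1 ≤ m)
    (hsource : 8 * C * A ^ 2 * (m + 1) ^ 2 ≤ E m) :
    E m ≤ 2 * C * ((E (m + 1) - E m) ^ ((3 : ℝ) / 2) + (E (m + 1) - E m)) := by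
  have := hrec m hm
  have : 0 ≤ 8 * C * A ^ 2 * (m + 1) ^ 2 := by positivity
  linarith

lemma quadratic_lower_bound (hC : 0 < C) (hA0 : 0 ≤ A) (hA1 : A ≤ 1) (hE : Monotone E)
    (hrec : Recurrence C A E) {k₀ : ℕ} (hk₀ : 1 + 12 * C + 3456 * C ^ 3 ≤ k₀)
    (hbase : 8 * C * A ^ 2 * (k₀ + 1) ^ 2 ≤ E k₀) :
    ∀ m ≥ k₀, 8 * C * A ^ 2 * (m + 1) ^ 2 ≤ E m := by
  intro m hm
  induction m, hm using Nat.le_induction with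
  | base => exact hbase
  | succ m hm ih =>
    have hupper := le_two_mul_of_source_le hC hrec ((one_le_of_threshold_le hC hk₀).trans hm) ih
    have hinc := mul_two_mul_add_one_le (x := m + 1) hC hA0 hA1
      (by linarith [(Nat.cast_le (α := ℝ)).mpr hm]) (sub_nonneg.mpr (hE m.le_succ))
      (by nlinarith)
    push_cast
    linarith

lemma le_mul_sub_add_sq (hC : 0 < C) (hA0 : 0 ≤ A) (hA1 : A ≤ 1) (hE : Monotone E)
    (hrec : Recurrence C A E) {k₀ : ℕ} (hk₀ : 1 + 12 * C + 3456 * C ^ 3 ≤ k₀)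
    (hbase : 8 * C * A ^ 2 * (k₀ + 1) ^ 2 ≤ E k₀) :
    ∀ m ≥ k₀, E m ≤ 4 * C * ((E (m + 1) - E m) + (E (m + 1) - E m) ^ 2) := by
  intro m hm
  have hupper := le_two_mul_of_source_le hC hrec ((one_le_of_threshold_le hC hk₀).trans hm)
    (quadratic_lower_bound hC hA0 hA1 hE hrec hk₀ hbase m hm)
  have := rpow_three_halves_le_add_sq (sub_nonneg.mpr (hE m.le_succ))
  nlinarith

end SaintVenant

open SaintVenant in
theorem saint_venant_induction_general (C C₀ : ℝ) (hC : 0 < C) :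
    ∃ C' : ℝ, 0 < C' ∧
      ∀ (E : ℕ → ℝ) (A : ℝ),
        (∀ k, 0 ≤ E k) → Monotone E → 0 ≤ A → A ≤ 1 →
        (∀ k : ℕ, 1 ≤ k →
          E k ≤ C * ((E (k+1) - E k) ^ ((3:ℝ)/2) + (E (k+1) - E k) + A ^ 2 * (k+1) ^ 2)) →
        (∀ n : ℕ, E n ≤ C₀ * n) →
        ∀ k : ℕ, 1 ≤ k → E k ≤ C' * A ^ 2 * k ^ 2 := by
  obtain ⟨N, hN⟩ := exists_nat_ge (1 + 12 * C + 3456 * C ^ 3)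
  refine ⟨32 * C * (N + 1) ^ 2, by positivity, ?_⟩
  intro E A _ hE hA0 hA1 hrec hlin k hk
  by_contra! hbad
  set k₀ := k * (N + 1) with hk₀_def
  have hk₀ : (N : ℝ) + 1 ≤ k₀ := by
    rw [hk₀_def]; push_cast; nlinarith [(Nat.one_le_cast (α := ℝ)).mpr hk]
  have hbad₀ : 32 * C * A ^ 2 * k₀ ^ 2 < E k₀ := by
    have := hE (Nat.le_mul_of_pos_right k N.succ_pos)
    rw [hk₀_def]; push_cast; linarith
  have hbase : 8 * C * A ^ 2 * (k₀ + 1) ^ 2 ≤ E k₀ := by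
    have : ((k₀ : ℝ) + 1) ^ 2 ≤ 4 * k₀ ^ 2 := by nlinarith
    nlinarith [mul_nonneg hC.le (sq_nonneg A)]
  have hnonpos := hE.le_zero_of_le_mul_sub_add_sq (a := 0) (by simpa using hlin)
    (by positivity) (le_mul_sub_add_sq hC hA0 hA1 hE hrec (by linarith) hbase)
  nlinarith [mul_nonneg hC.le (sq_nonneg A)]

/-- The backwards-induction (Saint-Venant) lemma for truncated energies. -/
theorem saint_venant_induction (C C₀ : ℝ) (hC : 0 < C) (hC₀ : 0 ≤ C₀) :
    ∃ C' : ℝ, 0 < C' ∧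
      ∀ (E : ℕ → ℝ) (A : ℝ),
        (∀ k, 0 ≤ E k) → Monotone E → 0 ≤ A → A ≤ 1 →
        (∀ k : ℕ, 1 ≤ k →
          E k ≤ C * ((E (k+1) - E k) ^ ((3:ℝ)/2) + (E (k+1) - E k) + A ^ 2 * (k+1) ^ 2)) →
        (∀ n : ℕ, E n ≤ C₀ * n) →
        ∀ k : ℕ, 1 ≤ k → E k ≤ C' * A ^ 2 * k ^ 2 :=
  saint_venant_induction_general C C₀ hC
end
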